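/- Spectral properties, part 4: Let X be a complex infinite-dimensional separable Banach space and let A be a densely defined linear operator in X such that every power A^n (n ∈ ℕ) is a closed operator, and suppose there exist a set Y ⊆ C^∞(A) dense in X and a mapping B : Y → Y with ABf = f for every f ∈ Y, such that (a) Y ⊆ ⋃_{n≥1} ker A^n (i.e., for every f ∈ Y there is N with A^n f = 0 for all n ≥ N), and (b) for every f ∈ Y there exist α = α(f) ∈ (0,1) and c > 0 with ‖B^n f‖ ≤ c·α^n for all n ∈ ℕ. Then for every f ∈ Y \ {0} and every R ∈ (1, 1/r(B,f)) (with 1/0 := ∞) there exists M ∈ ℕ such that for all n ≥ M the closed disk {λ ∈ ℂ : |λ| ≤ R^n} is contained in σ_p(A^n); in particular, every λ ∈ ℂ with |λ| < 1/r(B,f) is an eigenvalue of A^n for all sufficiently large n. -/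

import Mathlib

open Filter Topology TopologicalSpace

/-- The domain of the `n`-th power of the operator `A` with domain `D`:
`x ∈ D(Aⁿ)` iff `Aᵏx ∈ D(A)` for all `k < n`. -/
def opDom {X : Type*} (A : X → X) (D : Set X) (n : ℕ) : Set X :=
  {x | ∀ k < n, A^[k] x ∈ D}

/-- `C^∞(A) = ⋂ₙ D(Aⁿ)`. -/
def opCinf {X : Type*} (A : X → X) (D : Set X) : Set X :=
  {x | ∀ k : ℕ, A^[k] x ∈ D}

/-- `A` is linear on the subspace `D`. -/
def IsLinearOn (𝕜 : Type*) {X : Type*} [RCLike 𝕜] [NormedAddCommGroup X]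
    [NormedSpace 𝕜 X] (A : X → X) (D : Set X) : Prop :=
  (∀ x ∈ D, ∀ y ∈ D, A (x + y) = A x + A y) ∧
  (∀ (c : 𝕜), ∀ x ∈ D, A (c • x) = c • A x)

/-- The `n`-th power of `A` (with domain `D`) is a closed operator:
its graph is closed in `X × X`. -/
def ClosedPower {X : Type*} [NormedAddCommGroup X] (A : X → X) (D : Set X)
    (n : ℕ) : Prop :=
  IsClosed {p : X × X | p.1 ∈ opDom A D n ∧ p.2 = A^[n] p.1}

/-- A hypercyclic vector for `A`: a nonzero `f ∈ C^∞(A)` with dense orbit. -/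
def HypercyclicVec {X : Type*} [NormedAddCommGroup X] (A : X → X) (D : Set X)
    (f : X) : Prop :=
  f ∈ opCinf A D ∧ f ≠ 0 ∧ Dense (Set.range fun n : ℕ => A^[n] f)

/-- `A` (with domain `D`) is hypercyclic. -/
def HypercyclicOp {X : Type*} [NormedAddCommGroup X] (A : X → X) (D : Set X) :
    Prop :=
  ∃ f, HypercyclicVec A D f

/-- `f` is a periodic point of `A`: `f ∈ D(A^N)` and `A^N f = f` for some `N ≥ 1`. -/
def PeriodicPt {X : Type*} (A : X → X) (D : Set X) (f : X) : Prop :=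
  ∃ N : ℕ, 0 < N ∧ f ∈ opDom A D N ∧ A^[N] f = f

/-- `A` (with domain `D`) is chaotic: hypercyclic with a dense set of periodic
points. -/
def ChaoticOp {X : Type*} [NormedAddCommGroup X] (A : X → X) (D : Set X) : Prop :=
  HypercyclicOp A D ∧ Dense {f | PeriodicPt A D f}

/-- The local quantity `r(T,f) = limsup ‖Tⁿ f‖^{1/n}`, computed in `ℝ≥0∞`. -/
noncomputable def orbitRad {X : Type*} [NormedAddCommGroup X] (T : X → X)
    (f : X) : ENNReal :=
  Filter.limsup (fun n : ℕ => (‖T^[n] f‖₊ : ENNReal) ^ (1 / (n : ℝ))) Filter.atTop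

/-- The point spectrum of the `n`-th power of `A` (with domain `D`):
`λ ∈ σ_p(Aⁿ)` iff `Aⁿ g = λ g` for some nonzero `g ∈ D(Aⁿ)`. -/
def pointSpecPow {X : Type*} [NormedAddCommGroup X] [NormedSpace ℂ X]
    (A : X → X) (D : Set X) (n : ℕ) : Set ℂ :=
  {l | ∃ g, g ≠ 0 ∧ g ∈ opDom A D n ∧ A^[n] g = l • g}

/-! For `f ∈ Y \ {0}` and `‖λ‖ ≤ Rⁿ`, pick `s < 1/R` with `‖Bᵐ f‖ ≤ sᵐ` eventually. The series
`g = ∑ⱼ λʲ Bⁿʲ f` then has terms of size `((R s)ⁿ)ʲ` for `j ≥ 1`, so it converges, and for large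
`n` its tail is shorter than `‖f‖`, whence `g ≠ 0`. Since `Aⁿ f = 0` and `Aⁿ Bⁿ⁽ʲ⁺¹⁾ f = Bⁿʲ f`,
the partial sums satisfy `Aⁿ S_{J+1} = λ S_J`, and closedness of `Aⁿ` gives `Aⁿ g = λ g`.

The decay hypothesis (b) gives `r(B,f) < 1`, so in the second statement a fixed `R > 1` can be used
for every `λ`, since `‖λ‖ ≤ Rⁿ` for large `n`. -/

namespace IsLinearOn

variable {𝕜 X : Type*} [RCLike 𝕜] [NormedAddCommGroup X] [NormedSpace 𝕜 X]
  {A : X → X} {D : Submodule 𝕜 X}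

theorem iterate_zero (h : IsLinearOn 𝕜 A D) (k : ℕ) : A^[k] 0 = 0 :=
  Function.iterate_fixed (by simpa using h.2 0 0 D.zero_mem) k

theorem iterate_add (h : IsLinearOn 𝕜 A D) {x y : X} (hx : x ∈ opCinf A D)
    (hy : y ∈ opCinf A D) (k : ℕ) : A^[k] (x + y) = A^[k] x + A^[k] y := by
  induction k with
  | zero => rfl
  | succ k ih => simp only [Function.iterate_succ_apply', ih, h.1 _ (hx k) _ (hy k)]

theorem iterate_smul (h : IsLinearOn 𝕜 A D) (c : 𝕜) {x : X} (hx : x ∈ opCinf A D)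
    (k : ℕ) : A^[k] (c • x) = c • A^[k] x := by
  induction k with
  | zero => rfl
  | succ k ih => simp only [Function.iterate_succ_apply', ih, h.2 c _ (hx k)]

def cinfSubmodule (h : IsLinearOn 𝕜 A D) : Submodule 𝕜 X where
  carrier := opCinf A D
  zero_mem' k := by simp only [h.iterate_zero, SetLike.mem_coe, D.zero_mem]
  add_mem' hx hy k := by
    simpa only [h.iterate_add hx hy, SetLike.mem_coe] using D.add_mem (hx k) (hy k)
  smul_mem' c _ hx k := by
    simpa only [h.iterate_smul c hx, SetLike.mem_coe] using D.smul_mem c (hx k)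

def iterateLinearMap (h : IsLinearOn 𝕜 A D) (k : ℕ) : h.cinfSubmodule →ₗ[𝕜] X where
  toFun x := A^[k] x
  map_add' x y := h.iterate_add x.2 y.2 k
  map_smul' c x := h.iterate_smul c x.2 k

theorem iterate_sum (h : IsLinearOn 𝕜 A D) {ι : Type*} (s : Finset ι) {u : ι → X}
    (hu : ∀ i, u i ∈ opCinf A D) (k : ℕ) :
    A^[k] (∑ i ∈ s, u i) = ∑ i ∈ s, A^[k] (u i) := by
  simpa only [iterateLinearMap, LinearMap.coe_mk, AddHom.coe_mk, Submodule.coe_sum] using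
    map_sum (h.iterateLinearMap k) (fun i => (⟨u i, hu i⟩ : h.cinfSubmodule)) s

end IsLinearOn

theorem opCinf_subset_opDom {X : Type*} (A : X → X) (D : Set X) (n : ℕ) :
    opCinf A D ⊆ opDom A D n := fun _ hx k _ => hx k

theorem iterate_iterate_add_of_leftInvOn {X : Type*} {A B : X → X} {Y : Set X}
    (hB : Set.MapsTo B Y Y) (hAB : Set.LeftInvOn A B Y) {f : X} (hf : f ∈ Y) (m n : ℕ) :
    A^[n] (B^[m + n] f) = B^[m] f := by
  induction n with
  | zero => rfl
  | succ n ih =>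
    rw [Function.iterate_succ_apply, ← add_assoc, Function.iterate_succ_apply',
      hAB (hB.iterate _ hf), ih]

section OrbitRad

variable {X : Type*} [NormedAddCommGroup X] {T : X → X} {f : X} {s : ℝ}

theorem coe_nnnorm_rpow_one_div_le_ofReal_iff (x : X) (hs : 0 ≤ s) {m : ℕ} (hm : m ≠ 0) :
    (‖x‖₊ : ENNReal) ^ (1 / (m : ℝ)) ≤ ENNReal.ofReal s ↔ ‖x‖ ≤ s ^ m := by
  rw [one_div, ENNReal.rpow_inv_le_iff (by positivity), ENNReal.rpow_natCast,
    ← ENNReal.ofReal_pow hs, ← enorm_eq_nnnorm, ← ofReal_norm,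
    ENNReal.ofReal_le_ofReal_iff (by positivity)]

theorem eventually_norm_iterate_le_of_orbitRad_lt (h : orbitRad T f < ENNReal.ofReal s) :
    ∀ᶠ m in atTop, ‖T^[m] f‖ ≤ s ^ m := by
  have hs : 0 ≤ s := by
    by_contra! hs
    simp [ENNReal.ofReal_of_nonpos hs.le] at h
  filter_upwards [eventually_lt_of_limsup_lt h, eventually_ne_atTop 0] with m hm hm0
  exact (coe_nnnorm_rpow_one_div_le_ofReal_iff _ hs hm0).1 hm.le

theorem orbitRad_le_of_eventually_norm_iterate_le (hs : 0 ≤ s)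
    (h : ∀ᶠ m in atTop, ‖T^[m] f‖ ≤ s ^ m) : orbitRad T f ≤ ENNReal.ofReal s := by
  refine limsup_le_of_le (by isBoundedDefault) ?_
  filter_upwards [h, eventually_ne_atTop 0] with m hm hm0
  exact (coe_nnnorm_rpow_one_div_le_ofReal_iff _ hs hm0).2 hm

theorem orbitRad_lt_one {α c : ℝ} (hα0 : 0 ≤ α) (hα1 : α < 1) (hc : 0 < c)
    (h : ∀ᶠ m in atTop, ‖T^[m] f‖ ≤ c * α ^ m) : orbitRad T f < 1 := by
  obtain ⟨β, hαβ, hβ1⟩ := exists_between hα1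
  have hpow := (isLittleO_pow_pow_of_lt_left hα0 hαβ).def (inv_pos.2 hc)
  have hβ0 : 0 ≤ β := hα0.trans hαβ.le
  refine (orbitRad_le_of_eventually_norm_iterate_le hβ0 ?_).trans_lt
    (ENNReal.ofReal_lt_one.2 hβ1)
  filter_upwards [h, hpow] with m hm hmβ
  rw [Real.norm_of_nonneg (pow_nonneg hα0 m), Real.norm_of_nonneg (pow_nonneg hβ0 m)] at hmβ
  calc ‖T^[m] f‖ ≤ c * α ^ m := hm
    _ ≤ c * (c⁻¹ * β ^ m) := by gcongr
    _ = β ^ m := by field_simp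

end OrbitRad

theorem tsum_ne_zero_of_norm_le_geometric {E : Type*} [NormedAddCommGroup E] [CompleteSpace E]
    {u : ℕ → E} {q : ℝ} (hq0 : 0 ≤ q) (hq1 : q < 1) (hu : ∀ j, ‖u (j + 1)‖ ≤ q ^ (j + 1))
    (hsmall : q / (1 - q) < ‖u 0‖) : Summable u ∧ ∑' j, u j ≠ 0 := by
  have hgeom : HasSum (fun j : ℕ => q ^ (j + 1)) (q / (1 - q)) := by
    simpa only [pow_succ', div_eq_mul_inv] using (hasSum_geometric_of_lt_one hq0 hq1).mul_left q
  have htail : Summable fun j => u (j + 1) := .of_norm_bounded hgeom.summable hu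
  have hsum : Summable u := (summable_nat_add_iff 1).1 htail
  refine ⟨hsum, fun h0 => hsmall.not_ge ?_⟩
  have : u 0 = -∑' j, u (j + 1) := eq_neg_of_add_eq_zero_left (hsum.tsum_eq_zero_add ▸ h0)
  rw [this, norm_neg]
  exact tsum_of_norm_bounded hgeom hu

theorem Filter.Eventually.exists_pos_forall_ge {p : ℕ → Prop} (h : ∀ᶠ n in atTop, p n) :
    ∃ M, 0 < M ∧ ∀ n ≥ M, p n := by
  obtain ⟨M, hM⟩ := eventually_atTop.1 h
  exact ⟨M + 1, M.succ_pos, fun n hn => hM n (by omega)⟩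

section PointSpectrum

variable {X : Type*} [NormedAddCommGroup X] [NormedSpace ℂ X] {A B : X → X} {Y : Set X}

theorem mem_pointSpecPow_of_tendsto {D : Set X} {n : ℕ} (hcl : ClosedPower A D n)
    {S : ℕ → X} {g : X} {l : ℂ} (hS : ∀ J, S J ∈ opDom A D n)
    (hAS : ∀ J, A^[n] (S (J + 1)) = l • S J) (hg : Tendsto S atTop (𝓝 g)) (hg0 : g ≠ 0) :
    l ∈ pointSpecPow A D n := by
  have hgraph : Tendsto (fun J => (S (J + 1), l • S J)) atTop (𝓝 (g, l • g)) :=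
    (hg.comp (tendsto_add_atTop_nat 1)).prodMk_nhds (hg.const_smul l)
  obtain ⟨hgD, hAg⟩ := hcl.mem_of_tendsto hgraph (.of_forall fun J => ⟨hS (J + 1), (hAS J).symm⟩)
  exact ⟨g, hg0, hgD, hAg.symm⟩

variable {D : Submodule ℂ X}

theorem iterate_sum_range_succ_pow_smul (hlin : IsLinearOn ℂ A D) (hYsub : Y ⊆ opCinf A D)
    (hB : Set.MapsTo B Y Y) (hAB : Set.LeftInvOn A B Y) {f : X} (hf : f ∈ Y) {n : ℕ}
    (hfn : A^[n] f = 0) (l : ℂ) (J : ℕ) :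
    A^[n] (∑ j ∈ Finset.range (J + 1), l ^ j • B^[n * j] f) =
      l • ∑ j ∈ Finset.range J, l ^ j • B^[n * j] f := by
  have hBf (m : ℕ) : B^[m] f ∈ opCinf A D := hYsub (hB.iterate m hf)
  rw [hlin.iterate_sum _ fun j => hlin.cinfSubmodule.smul_mem _ (hBf _), Finset.sum_range_succ',
    Finset.smul_sum]
  simp only [mul_zero, pow_zero, one_smul, Function.iterate_zero_apply, hfn, add_zero]
  refine Finset.sum_congr rfl fun j _ => ?_
  rw [hlin.iterate_smul _ (hBf _), mul_add_one, iterate_iterate_add_of_leftInvOn hB hAB hf,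
    pow_succ', mul_smul]

theorem mem_pointSpecPow_of_norm_le_geometric [CompleteSpace X] (hlin : IsLinearOn ℂ A D)
    {n : ℕ} (hcl : ClosedPower A D n) (hYsub : Y ⊆ opCinf A D) (hB : Set.MapsTo B Y Y)
    (hAB : Set.LeftInvOn A B Y) {f : X} (hf : f ∈ Y) (hfn : A^[n] f = 0) {l : ℂ} {q : ℝ}
    (hq0 : 0 ≤ q) (hq1 : q < 1) (hbound : ∀ j, ‖l ^ (j + 1) • B^[n * (j + 1)] f‖ ≤ q ^ (j + 1))
    (hsmall : q / (1 - q) < ‖f‖) : l ∈ pointSpecPow A D n := by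
  obtain ⟨hsum, hg0⟩ := tsum_ne_zero_of_norm_le_geometric (u := fun j => l ^ j • B^[n * j] f)
    hq0 hq1 hbound (by simpa using hsmall)
  refine mem_pointSpecPow_of_tendsto hcl (fun J => opCinf_subset_opDom _ _ _ ?_)
    (iterate_sum_range_succ_pow_smul hlin hYsub hB hAB hf hfn l) hsum.hasSum.tendsto_sum_nat hg0
  exact hlin.cinfSubmodule.sum_mem fun j _ =>
    hlin.cinfSubmodule.smul_mem _ (hYsub (hB.iterate _ hf))

theorem eventually_mem_pointSpecPow [CompleteSpace X] (hlin : IsLinearOn ℂ A D)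
    (hcl : ∀ n : ℕ, 0 < n → ClosedPower A D n) (hYsub : Y ⊆ opCinf A D) (hB : Set.MapsTo B Y Y)
    (hAB : Set.LeftInvOn A B Y) {f : X} (hf : f ∈ Y) (hf0 : f ≠ 0)
    (hnil : ∀ᶠ n in atTop, A^[n] f = 0) {R s : ℝ} (hR : 0 ≤ R) (hs : 0 ≤ s) (hRs : R * s < 1)
    (hdecay : ∀ᶠ m in atTop, ‖B^[m] f‖ ≤ s ^ m) :
    ∀ᶠ n in atTop, ∀ l : ℂ, ‖l‖ ≤ R ^ n → l ∈ pointSpecPow A D n := by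
  have ht0 : 0 ≤ R * s := mul_nonneg hR hs
  have hpow : Tendsto (fun n => (R * s) ^ n) atTop (𝓝 0) :=
    tendsto_pow_atTop_nhds_zero_of_lt_one ht0 hRs
  have hsmall : ∀ᶠ n in atTop, (R * s) ^ n / (1 - (R * s) ^ n) < ‖f‖ := by
    have : Tendsto (fun n => (R * s) ^ n / (1 - (R * s) ^ n)) atTop (𝓝 (0 / (1 - 0))) :=
      hpow.div (tendsto_const_nhds.sub hpow) (by norm_num)
    rw [sub_zero, zero_div] at this
    exact this.eventually (gt_mem_nhds (norm_pos_iff.2 hf0))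
  obtain ⟨M, hM⟩ := eventually_atTop.1 hdecay
  filter_upwards [hnil, hsmall, eventually_ge_atTop (max M 1)] with n hfn hn hnM l hl
  have hn0 : 0 < n := by omega
  refine mem_pointSpecPow_of_norm_le_geometric hlin (hcl n hn0) hYsub hB hAB hf hfn
    (pow_nonneg ht0 n) (pow_lt_one₀ ht0 hRs hn0.ne') (fun j => ?_) hn
  have hMn : M ≤ n * (j + 1) := by
    have : n ≤ n * (j + 1) := Nat.le_mul_of_pos_right n j.succ_pos
    omega
  calc ‖l ^ (j + 1) • B^[n * (j + 1)] f‖ = ‖l‖ ^ (j + 1) * ‖B^[n * (j + 1)] f‖ := by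
        rw [norm_smul, norm_pow]
    _ ≤ (R ^ n) ^ (j + 1) * s ^ (n * (j + 1)) := by gcongr; exact hM _ hMn
    _ = ((R * s) ^ n) ^ (j + 1) := by ring

theorem eventually_mem_pointSpecPow_of_ofReal_lt_inv_orbitRad [CompleteSpace X]
    (hlin : IsLinearOn ℂ A D) (hcl : ∀ n : ℕ, 0 < n → ClosedPower A D n)
    (hYsub : Y ⊆ opCinf A D) (hB : Set.MapsTo B Y Y)
    (hAB : Set.LeftInvOn A B Y) {f : X} (hf : f ∈ Y) (hf0 : f ≠ 0)
    (hnil : ∀ᶠ n in atTop, A^[n] f = 0) {R : ℝ} (hR : 0 < R)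
    (hRr : ENNReal.ofReal R < (orbitRad B f)⁻¹) :
    ∀ᶠ n in atTop, ∀ l : ℂ, ‖l‖ ≤ R ^ n → l ∈ pointSpecPow A D n := by
  have hr : orbitRad B f < ENNReal.ofReal R⁻¹ := by
    rw [ENNReal.ofReal_inv_of_pos hR]
    exact ENNReal.lt_inv_iff_lt_inv.1 hRr
  obtain ⟨s, hs0, hrs, hsR⟩ := ENNReal.lt_iff_exists_real_btwn.1 hr
  rw [ENNReal.ofReal_lt_ofReal_iff (inv_pos.2 hR)] at hsR
  have hRs : R * s < 1 := by
    calc R * s < R * R⁻¹ := by gcongr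
      _ = 1 := mul_inv_cancel₀ hR.ne'
  exact eventually_mem_pointSpecPow hlin hcl hYsub hB hAB hf hf0 hnil hR.le hs0 hRs
    (eventually_norm_iterate_le_of_orbitRad_lt hrs)

end PointSpectrum

theorem spectral_properties_part4_general
    {X : Type*} [NormedAddCommGroup X] [NormedSpace ℂ X]
    [CompleteSpace X]
    (D : Submodule ℂ X) (A : X → X)
    (hlin : IsLinearOn ℂ A (D : Set X))
    (hcl : ∀ n : ℕ, 0 < n → ClosedPower A (D : Set X) n)
    (Y : Set X) (hYsub : Y ⊆ opCinf A (D : Set X))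
    (B : X → X) (hBmaps : Set.MapsTo B Y Y)
    (h1 : ∀ f ∈ Y, A (B f) = f)
    (h2a : ∀ f ∈ Y, ∃ N : ℕ, ∀ n ≥ N, A^[n] f = 0)
    (h2b : ∀ f ∈ Y, ∃ α ∈ Set.Ioo (0 : ℝ) 1, ∃ c > 0, ∀ n : ℕ, 0 < n →
      ‖B^[n] f‖ ≤ c * α ^ n) :
    (∀ f ∈ Y, f ≠ 0 → ∀ R : ℝ,
      1 < R → ENNReal.ofReal R < (orbitRad B f)⁻¹ →
      ∃ M : ℕ, 0 < M ∧ ∀ n ≥ M, ∀ l : ℂ, ‖l‖ ≤ R ^ n →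
        l ∈ pointSpecPow A (D : Set X) n) ∧
    (∀ f ∈ Y, f ≠ 0 → ∀ l : ℂ, ENNReal.ofReal ‖l‖ < (orbitRad B f)⁻¹ →
      ∃ M : ℕ, 0 < M ∧ ∀ n ≥ M, l ∈ pointSpecPow A (D : Set X) n) := by
  have key {f : X} (hf : f ∈ Y) (hf0 : f ≠ 0) {R : ℝ} (hR : 1 < R)
      (hRr : ENNReal.ofReal R < (orbitRad B f)⁻¹) :
      ∀ᶠ n in atTop, ∀ l : ℂ, ‖l‖ ≤ R ^ n → l ∈ pointSpecPow A D n :=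
    eventually_mem_pointSpecPow_of_ofReal_lt_inv_orbitRad hlin hcl hYsub hBmaps h1 hf hf0
      (eventually_atTop.2 (h2a f hf)) (one_pos.trans hR) hRr
  refine ⟨fun f hf hf0 R hR hRr => (key hf hf0 hR hRr).exists_pos_forall_ge,
    fun f hf hf0 l _ => ?_⟩
  obtain ⟨α, hα, c, hc, hdecay⟩ := h2b f hf
  have hr : orbitRad B f < 1 :=
    orbitRad_lt_one hα.1.le hα.2 hc ((eventually_gt_atTop 0).mono hdecay)
  obtain ⟨γ, -, hγ1, hγr⟩ := ENNReal.lt_iff_exists_real_btwn.1 (ENNReal.one_lt_inv.2 hr)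
  have hγ : 1 < γ := ENNReal.one_lt_ofReal.1 hγ1
  have hlγ : ∀ᶠ n in atTop, ‖l‖ ≤ γ ^ n :=
    (tendsto_pow_atTop_atTop_of_one_lt hγ).eventually_ge_atTop ‖l‖
  exact (((key hf hf0 hγ hγr).and hlγ).mono fun n hn => hn.1 l hn.2).exists_pos_forall_ge

/-- **Spectral properties, part 4.** -/
theorem spectral_properties_part4
    {X : Type*} [NormedAddCommGroup X] [NormedSpace ℂ X]
    [CompleteSpace X] [SeparableSpace X]
    (hinfdim : ¬ FiniteDimensional ℂ X)
    (D : Submodule ℂ X) (A : X → X)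
    (hlin : IsLinearOn ℂ A (D : Set X))
    (hdd : Dense (D : Set X))
    (hcl : ∀ n : ℕ, 0 < n → ClosedPower A (D : Set X) n)
    (Y : Set X) (hYsub : Y ⊆ opCinf A (D : Set X)) (hYdense : Dense Y)
    (B : X → X) (hBmaps : Set.MapsTo B Y Y)
    (h1 : ∀ f ∈ Y, A (B f) = f)
    (h2a : ∀ f ∈ Y, ∃ N : ℕ, ∀ n ≥ N, A^[n] f = 0)
    (h2b : ∀ f ∈ Y, ∃ α ∈ Set.Ioo (0 : ℝ) 1, ∃ c > 0, ∀ n : ℕ, 0 < n →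
      ‖B^[n] f‖ ≤ c * α ^ n) :
    (∀ f ∈ Y, f ≠ 0 → ∀ R : ℝ,
      1 < R → ENNReal.ofReal R < (orbitRad B f)⁻¹ →
      ∃ M : ℕ, 0 < M ∧ ∀ n ≥ M, ∀ l : ℂ, ‖l‖ ≤ R ^ n →
        l ∈ pointSpecPow A (D : Set X) n) ∧
    (∀ f ∈ Y, f ≠ 0 → ∀ l : ℂ, ENNReal.ofReal ‖l‖ < (orbitRad B f)⁻¹ →
      ∃ M : ℕ, 0 < M ∧ ∀ n ≥ M, l ∈ pointSpecPow A (D : Set X) n) :=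
  spectral_properties_part4_general D A hlin hcl Y hYsub B hBmaps h1 h2a h2b
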